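/- Let R be a left DM ring for an ideal I. Then R is I-semiregular if and only if the left R-module R is a finitely I-supplemented module. -/

import Mathlib

open Submodule Function LinearMap

universe u v w x y

section Defs

variable (R : Type u) [Ring R]

/-- `I` (a left ideal) is a two-sided ideal. -/
def IsTwoSidedI (I : Ideal R) : Prop := ∀ a b : R, a ∈ I → a * b ∈ I

variable {M : Type v} [AddCommGroup M] [Module R M]

/-- `N` is PSD in the submodule `T` of `M` (taking `T = ⊤` gives "PSD in `M`"):
whenever `N + X = T`, there is a projective direct summand `S` of `T` with `S ≤ N`
and `T = S ⊕ X`. -/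
def PSDIn (T N : Submodule R M) : Prop :=
  ∀ X : Submodule R M, X ≤ T → N ⊔ X = T →
    ∃ S : Submodule R M, Module.Projective R S ∧ S ≤ N ∧ S ⊔ X = T ∧ S ⊓ X = ⊥

/-- `M` is PSD for the ideal `I`: every submodule of `IM` is PSD in `M`. -/
def PSDFor (I : Ideal R) (M : Type v) [AddCommGroup M] [Module R M] : Prop :=
  ∀ N : Submodule R M, N ≤ I • (⊤ : Submodule R M) → PSDIn R ⊤ N

/-- `R` is a left PSD ring for `I`: every finitely generated free left `R`-module is PSD for `I`. -/
def PSDRing (I : Ideal R) : Prop :=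
  ∀ (F : Type u) [AddCommGroup F] [Module R F] [Module.Free R F] [Module.Finite R F],
    PSDFor R I F

/-- `f : P → M` is a projective `I`-cover. -/
def IsProjICover (I : Ideal R) {P : Type w} [AddCommGroup P] [Module R P]
    (f : P →ₗ[R] M) : Prop :=
  Surjective f ∧ Module.Projective R P ∧
    LinearMap.ker f ≤ I • (⊤ : Submodule R P) ∧ PSDIn R ⊤ (LinearMap.ker f)

/-- A projective `I`-cover of `M`. -/
structure ProjICover (I : Ideal R) (M : Type v) [AddCommGroup M] [Module R M] where
  P : Type w
  [addP : AddCommGroup P]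
  [modP : Module R P]
  f : P →ₗ[R] M
  cover : IsProjICover R I f

/-- `R` is `I`-semiregular. -/
def ISemiregular (I : Ideal R) : Prop :=
  ∀ a : R, ∃ P Q : Submodule R R, IsCompl P Q ∧ Module.Projective R P ∧
    P ≤ Submodule.span R {a} ∧ Submodule.span R {a} ⊓ Q ≤ I

/-- `R` is `I`-semiperfect. -/
def ISemiperfect (I : Ideal R) : Prop :=
  ∀ K : Submodule R R, ∃ A B : Submodule R R, IsCompl A B ∧ Module.Projective R A ∧
    A ≤ K ∧ K ⊓ B ≤ I

end Defs




section Defs2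

variable (R : Type u) [Ring R]
variable {M : Type v} [AddCommGroup M] [Module R M]

/-- A submodule `S` is small in the submodule `T` (take `T = ⊤` for "small in `M`"). -/
def SmallIn (T S : Submodule R M) : Prop :=
  ∀ X : Submodule R M, X ≤ T → S ⊔ X = T → X = T

/-- `K` is DM in the submodule `T` of `M`: whenever `K + X = T` there is a direct
summand `S` of `T` with `S ≤ K` and `S + X = T`. -/
def DMIn (T K : Submodule R M) : Prop :=
  ∀ X : Submodule R M, X ≤ T → K ⊔ X = T →
    ∃ S : Submodule R M, S ≤ K ∧ (∃ S' : Submodule R M, S ⊔ S' = T ∧ S ⊓ S' = ⊥) ∧ S ⊔ X = T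

/-- `M` is DM for `I`: every submodule of `IM` is DM in `M`. -/
def DMFor (I : Ideal R) (M : Type v) [AddCommGroup M] [Module R M] : Prop :=
  ∀ K : Submodule R M, K ≤ I • (⊤ : Submodule R M) → DMIn R ⊤ K

/-- `R` is a left DM ring for `I`. -/
def DMRing (I : Ideal R) : Prop :=
  ∀ (F : Type u) [AddCommGroup F] [Module R F] [Module.Free R F] [Module.Finite R F],
    DMFor R I F

/-- `M` is an `I`-supplemented module. -/
def ISupplemented (I : Ideal R) (M : Type v) [AddCommGroup M] [Module R M] : Prop :=
  ∀ X : Submodule R M, ∃ Y : Submodule R M, Module.Projective R Y ∧ X ⊔ Y = ⊤ ∧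
    X ⊓ Y ≤ I • Y ∧ DMIn R Y (X ⊓ Y)

/-- `M` is a finitely `I`-supplemented module. -/
def FinISupplemented (I : Ideal R) (M : Type v) [AddCommGroup M] [Module R M] : Prop :=
  ∀ X : Submodule R M, X.FG → ∃ Y : Submodule R M, Module.Projective R Y ∧ X ⊔ Y = ⊤ ∧
    X ⊓ Y ≤ I • Y ∧ DMIn R Y (X ⊓ Y)

/-- `M` is a supplemented module. -/
def Supplemented (M : Type v) [AddCommGroup M] [Module R M] : Prop :=
  ∀ X : Submodule R M, ∃ Y : Submodule R M, X ⊔ Y = ⊤ ∧ SmallIn R Y (X ⊓ Y)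

/-- `M` is an `I`-semiperfect module. -/
def ISemiperfectMod (I : Ideal R) (M : Type v) [AddCommGroup M] [Module R M] : Prop :=
  ∀ K : Submodule R M, ∃ A B : Submodule R M, IsCompl A B ∧ Module.Projective R A ∧
    A ≤ K ∧ K ⊓ B ≤ I • (⊤ : Submodule R M)

/-- The radical of `M`: the intersection of all maximal submodules. -/
def RadM (M : Type v) [AddCommGroup M] [Module R M] : Submodule R M :=
  sInf {N : Submodule R M | IsCoatom N}

/-- The socle of `M`: the sum of all simple submodules. -/
def SocM (M : Type v) [AddCommGroup M] [Module R M] : Submodule R M :=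
  sSup {N : Submodule R M | IsSimpleModule R N}

/-- `P` is locally projective (lifting version). -/
def LocallyProjective (P : Type w) [AddCommGroup P] [Module R P] : Prop :=
  ∀ (A : Type x) (B : Type y) [AddCommGroup A] [Module R A] [AddCommGroup B] [Module R B]
    (g : A →ₗ[R] B) (f : P →ₗ[R] B), Surjective g →
      ∀ P₀ : Submodule R P, P₀.FG → ∃ h : P →ₗ[R] A, ∀ p ∈ P₀, f p = g (h p)

/-- `P` is locally projective (splitting version). -/
def LocallyProjectiveB (P : Type w) [AddCommGroup P] [Module R P] : Prop :=
  ∀ (N : Type x) [AddCommGroup N] [Module R N] (g : N →ₗ[R] P), Surjective g →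
    ∀ P₀ : Submodule R P, P₀.FG → ∃ h : P →ₗ[R] N, ∀ p ∈ P₀, g (h p) = p


/-- A locally projective `I`-cover of `M`. -/
structure LocProjICover (I : Ideal R) (M : Type v) [AddCommGroup M] [Module R M] where
  P : Type w
  [addP : AddCommGroup P]
  [modP : Module R P]
  f : P →ₗ[R] M
  surj : Surjective f
  locProj : LocallyProjective.{u, w, x, y} R P
  ker_le : LinearMap.ker f ≤ I • (⊤ : Submodule R P)
  psd : PSDIn R ⊤ (LinearMap.ker f)

/-- A locally projective cover of `M`. -/
structure LocProjCover (M : Type v) [AddCommGroup M] [Module R M] where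
  P : Type w
  [addP : AddCommGroup P]
  [modP : Module R P]
  f : P →ₗ[R] M
  surj : Surjective f
  locProj : LocallyProjective.{u, w, x, y} R P
  ker_small : SmallIn R ⊤ (LinearMap.ker f)

/-- A projective cover of `M`. -/
structure ProjCover (M : Type v) [AddCommGroup M] [Module R M] where
  P : Type w
  [addP : AddCommGroup P]
  [modP : Module R P]
  f : P →ₗ[R] M
  surj : Surjective f
  proj : Module.Projective R P
  ker_small : SmallIn R ⊤ (LinearMap.ker f)

/-- `M` is self-projective (quasi-projective). -/
def SelfProjective (M : Type v) [AddCommGroup M] [Module R M] : Prop :=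
  ∀ (K : Submodule R M) (f : M →ₗ[R] M ⧸ K), ∃ h : M →ₗ[R] M, K.mkQ ∘ₗ h = f

/-- A projectivity class of `R`-modules (in a fixed universe). -/
def ProjectivityClass
    (Pc : ∀ (N : Type w) [AddCommGroup N] [Module R N], Prop) : Prop :=
  (∀ (N : Type w) [AddCommGroup N] [Module R N], SelfProjective R N → Pc N) ∧
  (∀ (N P : Type w) [AddCommGroup N] [Module R N] [AddCommGroup P] [Module R P]
      (f : P →ₗ[R] N), Surjective f → Module.Projective R P → Pc (P × N) →
        Module.Projective R N)

/-- `Pc` is closed under direct summands. -/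
def ClosedUnderSummands
    (Pc : ∀ (N : Type w) [AddCommGroup N] [Module R N], Prop) : Prop :=
  ∀ (N P : Type w) [AddCommGroup N] [Module R N] [AddCommGroup P] [Module R P],
    Pc P → ∀ (i : N →ₗ[R] P) (p : P →ₗ[R] N), p ∘ₗ i = LinearMap.id → Pc N

/-- A `Pc`-projective `I`-cover of `M`. -/
structure PProjICover (Pc : ∀ (N : Type w) [AddCommGroup N] [Module R N], Prop)
    (I : Ideal R) (M : Type v) [AddCommGroup M] [Module R M] where
  Q : Type w
  [addQ : AddCommGroup Q]
  [modQ : Module R Q]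
  g : Q →ₗ[R] M
  surj : Surjective g
  memP : Pc Q
  ker_le : LinearMap.ker g ≤ I • (⊤ : Submodule R Q)
  psd : PSDIn R ⊤ (LinearMap.ker g)

end Defs2

/-!
For a two-sided `I`, `R` is `I`-semiregular iff every `Ra` contains a direct summand `P` of `R`
with complement `Q` such that `Ra ∩ Q ⊆ I`; this property passes to finitely generated left
ideals `X` by treating one generator at a time. The resulting `Q` is an `I`-supplement of `X`:
`X ∩ Q ⊆ I = IR` is DM in `R`, hence in its summand `Q`. Conversely, a projective
`I`-supplement of `Ra` yields a surjection `π` from `R` onto a projective module with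
`ker π ⊆ Ra` and `π(Ra) ⊆ I · im π`; for a section `g` of `π`, the kernel and image of the
idempotent `g ∘ π` are the required `P` and `Q`.
-/

theorem IsCompl.sup_inf_of_le {α : Type*} [Lattice α] [BoundedOrder α] [IsModularLattice α]
    {a b c d : α} (hab : IsCompl a b) (hcd : IsCompl c d) (hcb : c ≤ b) :
    IsCompl (a ⊔ c) (b ⊓ d) := by
  have hb : c ⊔ b ⊓ d = b := by
    rw [inf_comm, ← sup_inf_assoc_of_le _ hcb, hcd.sup_eq_top, top_inf_eq]
  refine IsCompl.of_eq ?_ ?_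
  · rw [← inf_assoc, sup_comm, sup_inf_assoc_of_le _ hcb, hab.inf_eq_bot, sup_bot_eq,
      hcd.inf_eq_bot]
  · rw [sup_assoc, hb, hab.sup_eq_top]

section Module

variable {R : Type u} [Ring R] {M : Type v} [AddCommGroup M] [Module R M]

theorem Module.Projective.of_isCompl [Module.Projective R M] {P Q : Submodule R M}
    (h : IsCompl P Q) : Module.Projective R P :=
  Module.Projective.of_split P.subtype (P.projectionOnto Q h) (projectionOnto_comp_subtype h)

theorem Submodule.map_projection_le {P Q X : Submodule R M} (h : IsCompl P Q) (hPX : P ≤ X) :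
    X.map (Q.projection P h.symm) ≤ X ⊓ Q := by
  rintro _ ⟨x, hx, rfl⟩
  refine ⟨?_, projection_apply_mem _ x⟩
  simpa using X.sub_mem hx (hPX (sub_projection_mem h.symm x))

theorem Submodule.smul_top_inf_le {I : Ideal R} {P Q : Submodule R M} (h : IsCompl P Q) :
    I • ⊤ ⊓ Q ≤ I • Q := by
  rw [← h.sup_eq_top, smul_sup, sup_comm, sup_inf_assoc_of_le _ smul_le_right]
  exact sup_le le_rfl ((inf_le_inf_right Q smul_le_right).trans (h.inf_eq_bot.le.trans bot_le))

theorem Submodule.isCompl_comap_subtype {S S' Y : Submodule R M} (hsup : S ⊔ S' = Y)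
    (hinf : S ⊓ S' = ⊥) : IsCompl (S.comap Y.subtype) (S'.comap Y.subtype) := by
  have hS : S ≤ Y := hsup ▸ le_sup_left
  have hS' : S' ≤ Y := hsup ▸ le_sup_right
  refine IsCompl.of_eq ?_ ?_
  · rw [← comap_inf, hinf, comap_bot, ker_subtype]
  · apply map_injective_of_injective Y.injective_subtype
    rw [map_sup, map_comap_subtype, map_comap_subtype, map_top, range_subtype,
      inf_eq_right.2 hS, inf_eq_right.2 hS', hsup]

theorem DMIn.of_isCompl {P Q K : Submodule R M} (h : IsCompl P Q) (hKQ : K ≤ Q)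
    (hK : DMIn R ⊤ K) : DMIn R Q K := by
  intro X hXQ hKX
  obtain ⟨S, hSK, ⟨S', hsup, hinf⟩, hSX⟩ :=
    hK (X ⊔ P) le_top (by rw [← sup_assoc, hKX, h.symm.sup_eq_top])
  have hSQ : S ≤ Q := hSK.trans hKQ
  refine ⟨S, hSK, ⟨S' ⊓ Q, ?_, ?_⟩, ?_⟩
  · rw [← sup_inf_assoc_of_le _ hSQ, hsup, top_inf_eq]
  · rw [← inf_assoc, hinf, bot_inf_eq]
  · calc S ⊔ X = S ⊔ X ⊔ P ⊓ Q := by rw [h.inf_eq_bot, sup_bot_eq]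
      _ = (S ⊔ X ⊔ P) ⊓ Q := (sup_inf_assoc_of_le _ (sup_le hSQ hXQ)).symm
      _ = Q := by rw [sup_assoc, hSX, top_inf_eq]

/-- The condition that `ISemiregular` imposes on the left ideals `Ra`, for an arbitrary
submodule of an arbitrary module, with `IM` in place of `I`. -/
def LiesAboveSummand (I : Ideal R) (X : Submodule R M) : Prop :=
  ∃ P Q : Submodule R M, IsCompl P Q ∧ P ≤ X ∧ X ⊓ Q ≤ I • ⊤

variable {I : Ideal R}

/-- If `X` lies above `P₀ ⊕ Q₀` and `Ra'` above `P₁ ⊕ Q₁`, where `a'` is the `Q₀`-component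
of `a`, then `X + Ra` lies above `(P₀ ⊕ P₁) ⊕ (Q₀ ∩ Q₁)`. -/
theorem LiesAboveSummand.sup_span_singleton (hcyc : ∀ m : M, LiesAboveSummand I (R ∙ m))
    {X : Submodule R M} (hX : LiesAboveSummand I X) (a : M) :
    LiesAboveSummand I (X ⊔ R ∙ a) := by
  obtain ⟨P₀, Q₀, h₀, hP₀, hXQ₀⟩ := hX
  set π₀ := Q₀.projection P₀ h₀.symm
  obtain ⟨P₁, Q₁, h₁, hP₁, hbQ₁⟩ := hcyc (π₀ a)
  set π₁ := Q₁.projection P₁ h₁.symm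
  have hP₁Q₀ : P₁ ≤ Q₀ := hP₁.trans ((span_singleton_le_iff_mem _ _).2 (projection_apply_mem _ a))
  have hπ₀a : π₀ a ∈ X ⊔ R ∙ a := by
    simpa using sub_mem (mem_sup_right (mem_span_singleton_self a))
      (mem_sup_left (hP₀ (sub_projection_mem h₀.symm a)) : a - π₀ a ∈ X ⊔ R ∙ a)
  refine ⟨P₀ ⊔ P₁, Q₀ ⊓ Q₁, h₀.sup_inf_of_le h₁ hP₁Q₀,
    sup_le (hP₀.trans le_sup_left) (hP₁.trans ((span_singleton_le_iff_mem _ _).2 hπ₀a)), ?_⟩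
  have hmap : (X ⊔ R ∙ a).map (π₁ ∘ₗ π₀) ≤ I • ⊤ :=
    calc (X ⊔ R ∙ a).map (π₁ ∘ₗ π₀) = (X.map π₀ ⊔ R ∙ π₀ a).map π₁ := by
          rw [map_comp, Submodule.map_sup, Submodule.map_span, Set.image_singleton]
      _ ≤ ((I • ⊤ : Submodule R M) ⊔ R ∙ π₀ a).map π₁ :=
          map_mono (sup_le_sup_right ((map_projection_le h₀ hP₀).trans hXQ₀) _)
      _ = (I • ⊤ : Submodule R M).map π₁ ⊔ (R ∙ π₀ a).map π₁ := Submodule.map_sup _ _ _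
      _ ≤ I • ⊤ := sup_le (map_le_iff_le_comap.2 (smul_top_le_comap_smul_top I π₁))
          ((map_projection_le h₁ hP₁).trans hbQ₁)
  rintro w ⟨hw, hwQ₀, hwQ₁⟩
  have hπw : π₁ (π₀ w) = w := by
    rw [projection_apply_of_mem_left _ hwQ₀, projection_apply_of_mem_left _ hwQ₁]
  exact hπw ▸ hmap ⟨w, hw, rfl⟩

theorem LiesAboveSummand.of_fg (hcyc : ∀ m : M, LiesAboveSummand I (R ∙ m))
    {X : Submodule R M} (hX : X.FG) : LiesAboveSummand I X :=
  fg_sup_span_induction (motive := fun X _ => LiesAboveSummand I X)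
    ⟨⊥, ⊤, isCompl_bot_top, le_rfl, by simp⟩
    (fun _ a _ hN => hN.sup_span_singleton hcyc a) X hX

theorem LiesAboveSummand.exists_supplement [Module.Projective R M] (hDM : DMFor R I M)
    {X : Submodule R M} (hX : LiesAboveSummand I X) :
    ∃ Y : Submodule R M, Module.Projective R Y ∧ X ⊔ Y = ⊤ ∧
      X ⊓ Y ≤ I • Y ∧ DMIn R Y (X ⊓ Y) := by
  obtain ⟨P, Q, h, hPX, hXQ⟩ := hX
  refine ⟨Q, .of_isCompl h.symm, ?_, (le_inf hXQ inf_le_right).trans (smul_top_inf_le h), ?_⟩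
  · exact top_le_iff.1 (h.sup_eq_top ▸ sup_le_sup_right hPX Q)
  · exact .of_isCompl h inf_le_right (hDM _ hXQ)

theorem LiesAboveSummand.of_surjective {Z : Type w} [AddCommGroup Z] [Module R Z]
    [Module.Projective R Z] {X : Submodule R M} (π : M →ₗ[R] Z) (hπ : Surjective π)
    (hker : ker π ≤ X) (hX : X.map π ≤ I • ⊤) : LiesAboveSummand I X := by
  obtain ⟨g, hg⟩ := Module.projective_lifting_property π LinearMap.id hπ
  have hπg (z : Z) : π (g z) = z := LinearMap.congr_fun hg z
  have he : IsIdempotentElem (g ∘ₗ π) := LinearMap.ext fun x => by simp [hπg]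
  refine ⟨ker (g ∘ₗ π), range (g ∘ₗ π), he.isCompl.symm, fun x hx => hker ?_, ?_⟩
  · simpa [hπg] using congrArg π (mem_ker.1 hx)
  · rintro w ⟨hwX, hw⟩
    rw [← he.mem_range_iff.1 hw]
    exact smul_top_le_comap_smul_top I g (hX ⟨w, hwX, rfl⟩)

/-- Lift `M → M/X` to `h : M → Y`. Since `X ∩ Y` is DM in `Y`, it contains a summand `S` of `Y`
with `S + h M = Y`; projecting `h` onto a complement of `S` gives a map as in `of_surjective`. -/
theorem LiesAboveSummand.of_supplement [Module.Projective R M] {X Y : Submodule R M}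
    [Module.Projective R Y] (hXY : X ⊔ Y = ⊤) (hXYI : X ⊓ Y ≤ I • Y)
    (hDM : DMIn R Y (X ⊓ Y)) : LiesAboveSummand I X := by
  have hYX : Surjective (X.mkQ ∘ₗ Y.subtype) := by
    rw [← range_eq_top, range_comp, range_subtype, map_mkQ_eq_top, hXY]
  obtain ⟨h, hh⟩ := Module.projective_lifting_property _ X.mkQ hYX
  have hhX (x : M) : x - h x ∈ X :=
    (Submodule.Quotient.eq X).1 (LinearMap.congr_fun hh x).symm
  have hsup : X ⊓ Y ⊔ (range h).map Y.subtype = Y := by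
    refine le_antisymm (sup_le inf_le_right (map_subtype_le _ _)) fun y hy => ?_
    refine mem_sup.2 ⟨y - h y, ⟨hhX y, sub_mem hy (h y).2⟩, h y, ?_, sub_add_cancel _ _⟩
    exact mem_map_of_mem (mem_range_self h y)
  obtain ⟨S, hSXY, ⟨S', hSS', hSS'bot⟩, hSh⟩ := hDM _ (map_subtype_le _ _) hsup
  have hc := isCompl_comap_subtype hSS' hSS'bot
  have := Module.Projective.of_isCompl hc.symm
  refine .of_surjective ((S'.comap Y.subtype).projectionOnto _ hc.symm ∘ₗ h) ?_ ?_ ?_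
  · rintro ⟨z, hz⟩
    have hzY : (z : M) ∈ S ⊔ (range h).map Y.subtype := hSh.symm ▸ z.2
    obtain ⟨s, hs, _, ⟨_, ⟨m, rfl⟩, rfl⟩, hsum⟩ := mem_sup.1 hzY
    refine ⟨m, Subtype.ext ?_⟩
    set s' : Y := ⟨s, (hSh ▸ le_sup_left : S ≤ Y) hs⟩
    have hms : h m = z - s' := Subtype.ext (by simp [s', ← hsum])
    have hs' : s' ∈ S.comap Y.subtype := hs
    simp [hms, projectionOnto_apply_of_mem_left _ hz, projectionOnto_apply_of_mem_right hc.symm hs']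
  · intro x hx
    have hhS : (h x : M) ∈ S := by simpa using mem_ker.1 hx
    simpa using X.add_mem (hhX x) (hSXY hhS).1
  · rintro _ ⟨x, hx, rfl⟩
    refine smul_top_le_comap_smul_top I (projectionOnto _ _ hc.symm)
      ((mem_smul_top_iff I Y (h x)).2 (hXYI ⟨?_, (h x).2⟩))
    simpa using X.sub_mem hx (hhX x)

end Module

theorem smul_top_eq_of_isTwoSidedI {R : Type u} [Ring R] {I : Ideal R} (hI : IsTwoSidedI R I) :
    I • (⊤ : Submodule R R) = I :=
  le_antisymm (smul_le.2 fun r hr s _ => hI r s hr)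
    fun r hr => by simpa using smul_mem_smul hr (mem_top (x := (1 : R)))

theorem iSemiregular_iff_forall_liesAboveSummand {R : Type u} [Ring R] {I : Ideal R}
    (hI : IsTwoSidedI R I) : ISemiregular R I ↔ ∀ a : R, LiesAboveSummand I (R ∙ a) := by
  simp only [LiesAboveSummand, smul_top_eq_of_isTwoSidedI hI]
  refine forall_congr' fun a => ⟨?_, ?_⟩
  · rintro ⟨P, Q, h, -, hP, hQ⟩
    exact ⟨P, Q, h, hP, hQ⟩
  · rintro ⟨P, Q, h, hP, hQ⟩
    exact ⟨P, Q, h, .of_isCompl h, hP, hQ⟩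

theorem stmt18 {R : Type u} [Ring R] (I : Ideal R) (hI : IsTwoSidedI R I)
    (hDM : DMRing R I) :
    ISemiregular R I ↔ FinISupplemented R I R := by
  rw [iSemiregular_iff_forall_liesAboveSummand hI]
  constructor
  · intro h X hX
    exact (LiesAboveSummand.of_fg h hX).exists_supplement (hDM R)
  · intro h a
    obtain ⟨Y, hY, hXY, hXYI, hDMY⟩ := h _ (fg_span_singleton a)
    exact .of_supplement hXY hXYI hDMY
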